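/- Let n ≥ 1, let M ⊆ ℝⁿ be open and connected, and let A : M → ℝ^{n+1} be a C^∞ map satisfying det[A(u) | dA(u)] = κ for all u ∈ M, where κ is a nonzero constant. Let dA^{(i)}(u) denote the determinant of the n×n matrix obtained from the Jacobian dA(u) by deleting its i-th row, and let W(u) ∈ ℝ^{n+1} be the vector with components (−1)^{i+1}·dA^{(i)}(u). Then W is constant on M if and only if the image of A is contained in an affine hyperplane of ℝ^{n+1}, i.e. if and only if there exists p ∈ ℝ^{n+1} with ⟨A(u), p⟩ = 1 for all u ∈ M (such a hyperplane necessarily does not pass through the origin, and one may take p = κ⁻¹·W). (This is the computational content of the statement that a level set of F(u,x) = ⟨A(u),x⟩ + Q(u) is an improper affine sphere exactly when the image of A lies in a hyperplane.) -/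

import Mathlib

open Matrix

noncomputable def pd1 {ι : Type*} [Fintype ι] [DecidableEq ι]
    (F : (ι → ℝ) → ℝ) (i : ι) (x : ι → ℝ) : ℝ :=
  fderiv ℝ F x (Pi.single i 1)

noncomputable def gradv {ι : Type*} [Fintype ι] [DecidableEq ι]
    (F : (ι → ℝ) → ℝ) (x : ι → ℝ) : ι → ℝ :=
  fun i => pd1 F i x

noncomputable def hessM {ι : Type*} [Fintype ι] [DecidableEq ι]
    (F : (ι → ℝ) → ℝ) (x : ι → ℝ) : Matrix ι ι ℝ :=
  Matrix.of fun i j => pd1 (pd1 F j) i x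

noncomputable def Hdet {ι : Type*} [Fintype ι] [DecidableEq ι]
    (F : (ι → ℝ) → ℝ) (x : ι → ℝ) : ℝ :=
  (hessM F x).det

noncomputable def Nvec {ι : Type*} [Fintype ι] [DecidableEq ι]
    (F : (ι → ℝ) → ℝ) (x : ι → ℝ) : ι → ℝ :=
  (hessM F x).adjugate *ᵥ gradv F x

noncomputable def Uval {ι : Type*} [Fintype ι] [DecidableEq ι]
    (F : (ι → ℝ) → ℝ) (x : ι → ℝ) : ℝ :=
  gradv F x ⬝ᵥ Nvec F x

/-- The Jacobian matrix of a map `A : ℝ^m → ℝ^k`. -/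
noncomputable def Jac {m k : ℕ} (A : (Fin m → ℝ) → (Fin k → ℝ)) (u : Fin m → ℝ) :
    Matrix (Fin k) (Fin m) ℝ :=
  Matrix.of fun i j => fderiv ℝ (fun v => A v i) u (Pi.single j 1)

/-- `dA^{(i)}`: the determinant of the `m×m` matrix obtained from the Jacobian of
`A : ℝ^m → ℝ^{m+1}` by deleting its `i`-th row. -/
noncomputable def minorDel {m : ℕ} (A : (Fin m → ℝ) → (Fin (m+1) → ℝ))
    (i : Fin (m+1)) (u : Fin m → ℝ) : ℝ :=
  ((Jac A u).submatrix i.succAbove id).det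

/-- `det[A | dA]`: the determinant of the `(m+1)×(m+1)` matrix whose first column is
`A(u)` and whose remaining columns are those of the Jacobian of `A`. -/
noncomputable def AdA {m : ℕ} (A : (Fin m → ℝ) → (Fin (m+1) → ℝ)) (u : Fin m → ℝ) : ℝ :=
  (Matrix.of fun i j =>
    (Fin.cons (A u) (fun k i' => Jac A u i' k) : Fin (m+1) → (Fin (m+1) → ℝ)) j i).det

/-!
Expanding `det[A | dA]` along its first column gives `⟨A, W⟩ = κ`, and expanding the
determinant with a repeated column `det[∂ₖA | dA] = 0` gives `⟨∂ₖA, W⟩ = 0`; so `W ≡ w₀` forces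
`⟨A, κ⁻¹ w₀⟩ = 1`. Conversely, differentiating `⟨A, p⟩ = 1` gives `⟨∂ₖA, p⟩ = 0`, so `W` and `κ p`
solve the same linear system with the invertible matrix `[A | dA]ᵀ`, whence `W = κ p`.
-/

namespace Matrix

variable {R : Type*} [CommRing R] {m : ℕ}

noncomputable def signedMinors (J : Matrix (Fin (m + 1)) (Fin m) R) : Fin (m + 1) → R :=
  fun i => (-1) ^ (i : ℕ) * (J.submatrix i.succAbove id).det

theorem det_of_vecCons_transpose (x : Fin (m + 1) → R) (J : Matrix (Fin (m + 1)) (Fin m) R) :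
    (of (vecCons x Jᵀ)).det = x ⬝ᵥ signedMinors J := by
  rw [det_succ_row_zero]
  refine Finset.sum_congr rfl fun i _ => ?_
  have hminor : (of (vecCons x Jᵀ)).submatrix Fin.succ i.succAbove
      = (J.submatrix i.succAbove id)ᵀ := rfl
  rw [hminor, det_transpose]
  change (-1) ^ (i : ℕ) * x i * _ = x i * ((-1) ^ (i : ℕ) * _)
  ring

theorem signedMinors_vecMul (J : Matrix (Fin (m + 1)) (Fin m) R) : signedMinors J ᵥ* J = 0 := by
  ext k
  have hrep : (of (vecCons (Jᵀ k) Jᵀ)).det = 0 :=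
    det_zero_of_row_eq (Fin.succ_ne_zero k).symm rfl
  rw [det_of_vecCons_transpose] at hrep
  rw [Pi.zero_apply, ← hrep, dotProduct_comm]
  rfl

theorem signedMinors_eq_det_smul {K : Type*} [Field K] {x p : Fin (m + 1) → K}
    {J : Matrix (Fin (m + 1)) (Fin m) K} (hdet : (of (vecCons x Jᵀ)).det ≠ 0)
    (hx : x ⬝ᵥ p = 1) (hp : p ᵥ* J = 0) :
    signedMinors J = (of (vecCons x Jᵀ)).det • p := by
  set C : Matrix (Fin (m + 1)) (Fin (m + 1)) K := of (vecCons x Jᵀ)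
  have hinj : Function.Injective C.mulVec :=
    mulVec_injective_iff_isUnit.mpr ((isUnit_iff_isUnit_det C).mpr hdet.isUnit)
  apply hinj
  ext j
  refine Fin.cases ?_ (fun k => ?_) j
  · change x ⬝ᵥ signedMinors J = x ⬝ᵥ (C.det • p)
    rw [dotProduct_smul, hx, smul_eq_mul, mul_one, det_of_vecCons_transpose]
  · change Jᵀ k ⬝ᵥ signedMinors J = Jᵀ k ⬝ᵥ (C.det • p)
    have hcol : ∀ v : Fin (m + 1) → K, Jᵀ k ⬝ᵥ v = (v ᵥ* J) k := fun v => dotProduct_comm _ _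
    rw [dotProduct_smul, hcol, hcol, signedMinors_vecMul, hp, Pi.zero_apply, smul_zero]

end Matrix

open Filter Topology

theorem vecMul_jac_eq_zero_of_dotProduct_eventuallyEq_const {m k : ℕ}
    {A : (Fin m → ℝ) → (Fin k → ℝ)} {u : Fin m → ℝ} {p : Fin k → ℝ} {c : ℝ}
    (hA : DifferentiableAt ℝ A u) (hp : (fun v => p ⬝ᵥ A v) =ᶠ[𝓝 u] fun _ => c) :
    p ᵥ* Jac A u = 0 := by
  let L : (Fin k → ℝ) →L[ℝ] ℝ := LinearMap.toContinuousLinearMap (dotProductBilin ℝ ℝ p)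
  have hL : HasFDerivAt (fun v => p ⬝ᵥ A v) (L.comp (fderiv ℝ A u)) u :=
    L.hasFDerivAt.comp u hA.hasFDerivAt
  have hzero : L.comp (fderiv ℝ A u) = 0 := by
    rw [← hL.fderiv, hp.fderiv_eq, fderiv_const_apply]
  ext j
  have hcol : (fun i => Jac A u i j) = fderiv ℝ A u (Pi.single j 1) := by
    ext i
    simp [Jac, fderiv_apply hA]
  change p ⬝ᵥ (fun i => Jac A u i j) = 0
  rw [hcol]
  exact DFunLike.congr_fun hzero (Pi.single j 1)

theorem stmt18_general (n : ℕ)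
    (M : Set (Fin n → ℝ)) (hM : IsOpen M)
    (A : (Fin n → ℝ) → (Fin (n+1) → ℝ)) (hA : ContDiffOn ℝ (⊤ : ℕ∞) A M)
    (κ : ℝ) (hκ : κ ≠ 0) (hAκ : ∀ u ∈ M, AdA A u = κ)
    (W : (Fin n → ℝ) → (Fin (n+1) → ℝ))
    (hW : ∀ u, W u = fun i : Fin (n+1) => (-1 : ℝ) ^ (i : ℕ) * minorDel A i u) :
    ((∃ w₀ : Fin (n+1) → ℝ, ∀ u ∈ M, W u = w₀) ↔
      (∃ p : Fin (n+1) → ℝ, ∀ u ∈ M, A u ⬝ᵥ p = 1)) ∧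
    (∀ w₀ : Fin (n+1) → ℝ, (∀ u ∈ M, W u = w₀) →
      ∀ u ∈ M, A u ⬝ᵥ (κ⁻¹ • w₀) = 1) := by
  have hW' : ∀ u, W u = signedMinors (Jac A u) := hW
  have hdet : ∀ u ∈ M, (of (vecCons (A u) (Jac A u)ᵀ)).det = κ := fun u hu =>
    (det_transpose _).symm.trans (hAκ u hu)
  have hplane : ∀ w₀ : Fin (n+1) → ℝ, (∀ u ∈ M, W u = w₀) →
      ∀ u ∈ M, A u ⬝ᵥ (κ⁻¹ • w₀) = 1 := by
    intro w₀ hw₀ u hu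
    rw [dotProduct_smul, ← hw₀ u hu, hW', ← det_of_vecCons_transpose, hdet u hu, smul_eq_mul,
      inv_mul_cancel₀ hκ]
  refine ⟨⟨fun ⟨w₀, hw₀⟩ => ⟨κ⁻¹ • w₀, hplane w₀ hw₀⟩, fun ⟨p, hp⟩ => ⟨κ • p, fun u hu => ?_⟩⟩,
    hplane⟩
  have hJ : p ᵥ* Jac A u = 0 := by
    have hAu : DifferentiableAt ℝ A u :=
      (hA.differentiableOn (by simp) u hu).differentiableAt (hM.mem_nhds hu)
    refine vecMul_jac_eq_zero_of_dotProduct_eventuallyEq_const hAu (c := 1) ?_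
    filter_upwards [hM.mem_nhds hu] with v hv
    rw [dotProduct_comm, hp v hv]
  rw [hW', ← hdet u hu]
  exact signedMinors_eq_det_smul (hdet u hu ▸ hκ) (hp u hu) hJ

/-- for a centroaffine `A : M → ℝ^{n+1}` with `det[A | dA] ≡ κ ≠ 0` on a
connected open `M`, the vector `W` of signed maximal minors of the Jacobian of `A` is
constant on `M` iff the image of `A` lies in an affine hyperplane `⟨·, p⟩ = 1`; and if
`W ≡ w₀` one may take `p = κ⁻¹ w₀`. -/
theorem stmt18 (n : ℕ) (hn : 1 ≤ n)
    (M : Set (Fin n → ℝ)) (hM : IsOpen M) (hMconn : IsConnected M)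
    (A : (Fin n → ℝ) → (Fin (n+1) → ℝ)) (hA : ContDiffOn ℝ (⊤ : ℕ∞) A M)
    (κ : ℝ) (hκ : κ ≠ 0) (hAκ : ∀ u ∈ M, AdA A u = κ)
    (W : (Fin n → ℝ) → (Fin (n+1) → ℝ))
    (hW : ∀ u, W u = fun i : Fin (n+1) => (-1 : ℝ) ^ (i : ℕ) * minorDel A i u) :
    ((∃ w₀ : Fin (n+1) → ℝ, ∀ u ∈ M, W u = w₀) ↔
      (∃ p : Fin (n+1) → ℝ, ∀ u ∈ M, A u ⬝ᵥ p = 1)) ∧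
    (∀ w₀ : Fin (n+1) → ℝ, (∀ u ∈ M, W u = w₀) →
      ∀ u ∈ M, A u ⬝ᵥ (κ⁻¹ • w₀) = 1) :=
  stmt18_general n M hM A hA κ hκ hAκ W hW
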